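/- arXiv:1612.00187 — 3 statements merged into one kernel-verified Lean document; each statement's English description precedes it below -/
import Mathlib

section
/- Let λ = (λ₁,…,λₙ) ∈ ℂⁿ with |λ_j| = 1 for all j, and let ρ : ℂⁿ → ℂⁿ be the map ρ(z)_j = λ_j z_j. Let U ⊆ ℂⁿ be an open connected set containing 0 that is invariant under every rotation ρ_α (α ∈ ℝⁿ). Let χ : U → ℝⁿ be continuously differentiable (viewing ℂⁿ as ℝ^{2n}) with χ(0) = 0, and let L : ℝⁿ × ℝⁿ → ℝ be continuously differentiable. Assume that for every z ∈ U the linear functional (∂₂L(χ(ρ⁻¹z), χ(z)) + ∂₁L(χ(z), χ(ρz)))ᵀ ∘ Dχ(z) on ℝ^{2n} is zero, where Dχ(z) is the (real) derivative of χ at z. Then for every z ∈ U, (2π)^{−n} ∫_{[0,2π]ⁿ} L(χ(ρ_α z), χ(ρ(ρ_α z))) dα = L(0,0). -/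
/-!
Put `F z = L(χ z, χ(ρ z))` and `k z = ∂₂L(χ(ρ⁻¹ z), χ z) ∘ Dχ(z)`. The hypothesis says exactly
that `DF(z) = k(ρ z) ∘ ρ - k(z)`. Since `ρ = ρ_β` is itself a torus rotation, differentiating the
torus average `Φ(w) = ∫ F(ρ_θ w) dθ` under the integral gives `∫ (g(β + θ) - g(θ)) dθ` with
`g(θ) = k(ρ_θ w) ∘ ρ_θ`, which vanishes by translation invariance of Haar measure on the torus.
So `Φ` is constant on the connected set `U`, equal to `Φ(0) = (2π)ⁿ L(0, 0)`; the box `[0, 2π]ⁿ`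
is, up to a null set, a fundamental domain of the torus.
-/

open MeasureTheory

/-- The torus rotation `ρ_α : ℂⁿ → ℂⁿ`, `(ρ_α z)_j = e^{iα_j} z_j`. -/
noncomputable def rotAct {n : ℕ} (α : Fin n → ℝ) (z : Fin n → ℂ) : Fin n → ℂ :=
  fun j => Complex.exp ((α j : ℂ) * Complex.I) * z j

/-- The box `[0,2π]ⁿ ⊆ ℝⁿ`. -/
def torusBox (n : ℕ) : Set (Fin n → ℝ) :=
  Set.univ.pi fun _ => Set.Icc (0 : ℝ) (2 * Real.pi)

open Set Metric

theorem hasFDerivAt_integral_of_continuousOn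
    {X E G : Type*} [TopologicalSpace X] [CompactSpace X] [SecondCountableTopology X]
    [MeasurableSpace X] [OpensMeasurableSpace X]
    [NormedAddCommGroup E] [NormedSpace ℝ E] [ProperSpace E]
    [NormedAddCommGroup G] [NormedSpace ℝ G] [CompleteSpace G]
    (μ : Measure X) [IsFiniteMeasure μ] {U : Set E} (hU : IsOpen U)
    {f : E → X → G} {f' : E → X → E →L[ℝ] G}
    (hf : ContinuousOn (Function.uncurry f) (U ×ˢ univ))
    (hf' : ContinuousOn (Function.uncurry f') (U ×ˢ univ))
    (hderiv : ∀ x, ∀ w ∈ U, HasFDerivAt (f · x) (f' w x) w) {w : E} (hw : w ∈ U) :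
    HasFDerivAt (fun w => ∫ x, f w x ∂μ) (∫ x, f' w x ∂μ) w := by
  obtain ⟨ε, hε, hεU⟩ := nhds_basis_closedBall.mem_iff.1 (hU.mem_nhds hw)
  obtain ⟨M, hM⟩ := ((isCompact_closedBall w ε).prod isCompact_univ).exists_bound_of_continuousOn
    (hf'.mono (prod_mono hεU subset_rfl))
  refine hasFDerivAt_integral_of_dominated_of_fderiv_le (closedBall_mem_nhds w hε)
    (bound := fun _ => M) ?_ ?_
    (continuousOn_univ.1 (hf'.uncurry_left w hw)).aestronglyMeasurable ?_ (integrable_const M) ?_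
  · filter_upwards [hU.mem_nhds hw] with v hv
    exact (continuousOn_univ.1 (hf.uncurry_left v hv)).aestronglyMeasurable
  · exact (continuousOn_univ.1 (hf.uncurry_left w hw)).integrable_of_hasCompactSupport
      (HasCompactSupport.of_compactSpace _)
  · exact ae_of_all _ fun x v hv => hM (v, x) ⟨hv, mem_univ x⟩
  · exact ae_of_all _ fun x v hv => hderiv x v (hεU hv)

theorem integral_comp_apply_eq_of_hasFDerivAt_eq_sub
    {G E : Type*} [AddGroup G] [TopologicalSpace G] [ContinuousAdd G] [CompactSpace G]
    [SecondCountableTopology G] [MeasurableSpace G] [BorelSpace G]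
    [NormedAddCommGroup E] [NormedSpace ℝ E] [ProperSpace E]
    (μ : Measure G) [IsFiniteMeasure μ] [μ.IsAddLeftInvariant]
    {τ : G → E →L[ℝ] E} (hτ : Continuous τ) (hτ_add : ∀ θ θ' z, τ (θ + θ') z = τ θ (τ θ' z))
    {U : Set E} (hU : IsOpen U) (hUc : IsPreconnected U) (hUτ : ∀ θ, ∀ z ∈ U, τ θ z ∈ U)
    {F : E → ℝ} {k : E → E →L[ℝ] ℝ} (hk : ContinuousOn k U) (b : G)
    (hF : ∀ z ∈ U, HasFDerivAt F ((k (τ b z)).comp (τ b) - k z) z)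
    {w w' : E} (hw : w ∈ U) (hw' : w' ∈ U) :
    ∫ θ, F (τ θ w) ∂μ = ∫ θ, F (τ θ w') ∂μ := by
  have hτU : MapsTo (fun p : E × G => τ p.2 p.1) (U ×ˢ univ) U := fun p hp => hUτ p.2 p.1 hp.1
  have hτc : Continuous fun p : E × G => τ p.2 p.1 :=
    (hτ.comp continuous_snd).clm_apply continuous_fst
  set g : E → G → E →L[ℝ] ℝ := fun z θ => (k (τ θ z)).comp (τ θ)
  have hg : ContinuousOn (Function.uncurry g) (U ×ˢ univ) :=
    (hk.comp hτc.continuousOn hτU).clm_comp (hτ.comp continuous_snd).continuousOn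
  have hΦ : ∀ z ∈ U, HasFDerivAt (fun z => ∫ θ, F (τ θ z) ∂μ) (0 : E →L[ℝ] ℝ) z := by
    intro z hz
    have hderiv : ∀ θ, ∀ y ∈ U, HasFDerivAt (fun y => F (τ θ y)) (g y (b + θ) - g y θ) y := by
      intro θ y hy
      refine ((hF _ (hUτ θ y hy)).comp y (τ θ).hasFDerivAt).congr_fderiv ?_
      ext v
      simp [g, hτ_add]
    have hgb : ContinuousOn (Function.uncurry fun z θ => g z (b + θ) - g z θ) (U ×ˢ univ) :=
      (hg.comp (continuous_fst.prodMk (continuous_const.add continuous_snd)).continuousOn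
        fun p hp => ⟨hp.1, mem_univ _⟩).sub hg
    have hFc : ContinuousOn F U := fun y hy => (hF y hy).continuousAt.continuousWithinAt
    have hcont : ContinuousOn (Function.uncurry fun z θ => F (τ θ z)) (U ×ˢ univ) :=
      hFc.comp hτc.continuousOn hτU
    refine (hasFDerivAt_integral_of_continuousOn μ hU hcont hgb hderiv hz).congr_fderiv ?_
    have hgz : Continuous (g z) := continuousOn_univ.1 (hg.uncurry_left z hz)
    have hgbz : Continuous fun θ => g z (b + θ) := hgz.comp (continuous_const_add b)
    rw [integral_sub (hgbz.integrable_of_hasCompactSupport (.of_compactSpace _))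
      (hgz.integrable_of_hasCompactSupport (.of_compactSpace _)),
      integral_add_left_eq_self (g z) b, sub_self]
  exact hU.is_const_of_fderiv_eq_zero hUc
    (fun z hz => (hΦ z hz).differentiableAt.differentiableWithinAt)
    (fun z hz => (hΦ z hz).fderiv) hw hw'

section SecondPartialForm

variable {E V : Type*} [NormedAddCommGroup E] [NormedSpace ℝ E]
  [NormedAddCommGroup V] [NormedSpace ℝ V]

/-- The form `k` of the proof idea, with `ρ'` in the role of `ρ⁻¹`. -/
noncomputable def secondPartialForm (L : V × V → ℝ) (χ : E → V) (ρ' : E → E) (z : E) :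
    E →L[ℝ] ℝ :=
  (fderiv ℝ L (χ (ρ' z), χ z)).comp ((ContinuousLinearMap.inr ℝ V V).comp (fderiv ℝ χ z))

theorem continuousOn_secondPartialForm {L : V × V → ℝ} (hL : ContDiff ℝ 1 L) {U : Set E}
    (hU : IsOpen U) {χ : E → V} (hχ : ContDiffOn ℝ 1 χ U) {ρ' : E → E} (hρ' : ContinuousOn ρ' U)
    (hρ'U : MapsTo ρ' U U) : ContinuousOn (secondPartialForm L χ ρ') U :=
  ((hL.continuous_fderiv one_ne_zero).comp_continuousOn
      ((hχ.continuousOn.comp hρ' hρ'U).prodMk hχ.continuousOn)).clm_comp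
    (continuousOn_const.clm_comp (hχ.continuousOn_fderiv_of_isOpen hU le_rfl))

theorem hasFDerivAt_secondPartialForm_sub {L : V × V → ℝ} (hL : Differentiable ℝ L) {U : Set E}
    (hU : IsOpen U) {χ : E → V} (hχ : DifferentiableOn ℝ χ U) {ρ : E →L[ℝ] E} {ρ' : E → E}
    (hρU : MapsTo ρ U U) (hρ' : ∀ z, ρ' (ρ z) = z)
    (heq : ∀ z ∈ U, ∀ v, fderiv ℝ L (χ (ρ' z), χ z) (0, fderiv ℝ χ z v) +
      fderiv ℝ L (χ z, χ (ρ z)) (fderiv ℝ χ z v, 0) = 0) {z : E} (hz : z ∈ U) :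
    HasFDerivAt (fun z => L (χ z, χ (ρ z)))
      ((secondPartialForm L χ ρ' (ρ z)).comp ρ - secondPartialForm L χ ρ' z) z := by
  have hχz := (hχ.differentiableAt (hU.mem_nhds hz)).hasFDerivAt
  have hχρz := (hχ.differentiableAt (hU.mem_nhds (hρU hz))).hasFDerivAt
  refine ((hL _).hasFDerivAt.comp z (hχz.prodMk (hχρz.comp z ρ.hasFDerivAt))).congr_fderiv ?_
  ext v
  have hsplit : ((fderiv ℝ χ z v, fderiv ℝ χ (ρ z) (ρ v)) : V × V) =
      (fderiv ℝ χ z v, 0) + (0, fderiv ℝ χ (ρ z) (ρ v)) := by simp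
  simp only [ContinuousLinearMap.comp_apply, ContinuousLinearMap.prod_apply, hsplit, map_add,
    sub_apply, secondPartialForm, ContinuousLinearMap.inr_apply, hρ',
    Function.comp_apply]
  linarith [heq z hz v]

end SecondPartialForm

open Real

local notation "𝕋" => AddCircle (2 * π)

local instance : Fact (0 < 2 * π) := ⟨two_pi_pos⟩

noncomputable def torusRot {n : ℕ} (θ : Fin n → 𝕋) : (Fin n → ℂ) →L[ℝ] (Fin n → ℂ) :=
  ContinuousLinearMap.pi fun j => ((θ j).toCircle : ℂ) • ContinuousLinearMap.proj j

section torusRot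

variable {n : ℕ}

@[simp]
lemma torusRot_apply (θ : Fin n → 𝕋) (z : Fin n → ℂ) (j : Fin n) :
    torusRot θ z j = (θ j).toCircle * z j :=
  rfl

lemma torusRot_add (θ θ' : Fin n → 𝕋) (z : Fin n → ℂ) :
    torusRot (θ + θ') z = torusRot θ (torusRot θ' z) := by
  ext j
  simp [AddCircle.toCircle_add, mul_assoc]

lemma continuous_torusRot : Continuous (torusRot (n := n)) :=
  continuous_clm_apply.2 fun _ => continuous_pi fun j =>
    ((continuous_subtype_val.comp AddCircle.continuous_toCircle).comp
      (continuous_apply j)).mul continuous_const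

lemma torusRot_coe (α : Fin n → ℝ) (z : Fin n → ℂ) :
    torusRot (fun j => (α j : 𝕋)) z = rotAct α z := by
  ext j
  simp [rotAct, AddCircle.toCircle_apply_mk, Circle.coe_exp, pi_ne_zero]

lemma torusRot_mem {U : Set (Fin n → ℂ)} (hU : ∀ α z, z ∈ U → rotAct α z ∈ U)
    (θ : Fin n → 𝕋) {z : Fin n → ℂ} (hz : z ∈ U) : torusRot θ z ∈ U := by
  obtain ⟨α, rfl⟩ :=
    (QuotientAddGroup.mk_surjective (s := AddSubgroup.zmultiples (2 * π))).comp_left θ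
  exact torusRot_coe α z ▸ hU α z hz

lemma exists_toCircle_eq {lam : Fin n → ℂ} (hlam : ∀ j, ‖lam j‖ = 1) :
    ∃ b : Fin n → 𝕋, ∀ j, ((b j).toCircle : ℂ) = lam j :=
  ⟨fun j => (Complex.arg (lam j) : 𝕋), fun j => by
    simpa [AddCircle.toCircle_apply_mk, Circle.coe_exp, pi_ne_zero, hlam j] using
      Complex.norm_mul_exp_arg_mul_I (lam j)⟩

end torusRot

theorem setIntegral_torusBox_eq_integral {n : ℕ} {E : Type*} [NormedAddCommGroup E]
    [NormedSpace ℝ E] {f : (Fin n → 𝕋) → E} (hf : AEStronglyMeasurable f) :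
    ∫ α in torusBox n, f (fun j => α j) = ∫ θ, f θ := by
  have hbox : univ.pi (fun _ : Fin n => Ioc 0 (2 * π)) =ᵐ[volume] torusBox n := by
    simpa [torusBox, volume_pi] using
      Measure.univ_pi_Ioc_ae_eq_Icc (μ := fun _ : Fin n => volume)
        (f := fun _ => 0) (g := fun _ => 2 * π)
  have hmp : MeasurePreserving (fun (α : Fin n → ℝ) j => (α j : 𝕋))
      (volume.restrict (univ.pi fun _ => Ioc 0 (2 * π))) volume := by
    have := measurePreserving_pi _ _ fun _ : Fin n => AddCircle.measurePreserving_mk (2 * π) 0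
    rwa [zero_add, ← Measure.restrict_pi_pi, ← volume_pi, ← volume_pi] at this
  rw [← setIntegral_congr_set hbox, ← hmp.map_eq,
    integral_map hmp.measurable.aemeasurable (hmp.map_eq ▸ hf)]

theorem measureReal_univ_torus {n : ℕ} :
    (volume : Measure (Fin n → 𝕋)).real univ = (2 * π) ^ n := by
  simp [volume_pi, Measure.pi_univ, AddCircle.measure_univ, pi_nonneg, measureReal_def]

/-- Let `|λ_j| = 1` for all `j` and `ρ(z)_j = λ_j z_j`. Let `U ⊆ ℂⁿ` be an
open connected rotation-invariant neighborhood of `0`, `χ : U → ℝⁿ` be `C¹` (over `ℝ`) with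
`χ(0) = 0`, and `L : ℝⁿ × ℝⁿ → ℝ` be `C¹`. If for every `z ∈ U` the linear functional
`(∂₂L(χ(ρ⁻¹z), χ(z)) + ∂₁L(χ(z), χ(ρz)))ᵀ ∘ Dχ(z)` vanishes (expressed below by evaluating
the full derivative of `L` on `(0, Dχ(z)v)` resp. `(Dχ(z)v, 0)`), then for every `z ∈ U`
the torus average `(2π)⁻ⁿ ∫_{[0,2π]ⁿ} L(χ(ρ_α z), χ(ρ(ρ_α z))) dα` equals `L(0,0)`. -/
theorem statement5 (n : ℕ) (lam : Fin n → ℂ) (hmod : ∀ j, ‖lam j‖ = 1)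
    (U : Set (Fin n → ℂ)) (hUopen : IsOpen U) (hUconn : IsConnected U) (hU0 : 0 ∈ U)
    (hUinv : ∀ (α : Fin n → ℝ) (z : Fin n → ℂ), z ∈ U → rotAct α z ∈ U)
    (χ : (Fin n → ℂ) → (Fin n → ℝ)) (hχ : ContDiffOn ℝ 1 χ U) (hχ0 : χ 0 = 0)
    (L : (Fin n → ℝ) × (Fin n → ℝ) → ℝ) (hL : ContDiff ℝ 1 L)
    (heq : ∀ z ∈ U, ∀ v : Fin n → ℂ,
      fderiv ℝ L (χ (fun j => (lam j)⁻¹ * z j), χ z) (0, fderiv ℝ χ z v) +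
        fderiv ℝ L (χ z, χ (fun j => lam j * z j)) (fderiv ℝ χ z v, 0) = 0) :
    ∀ z ∈ U,
      ((2 * Real.pi) ^ n)⁻¹ *
          (∫ α in torusBox n,
            L (χ (rotAct α z), χ (fun j => lam j * rotAct α z j))) = L (0, 0) := by
  intro z hz
  obtain ⟨b, hb⟩ := exists_toCircle_eq hmod
  have hρ : ∀ w, torusRot b w = fun j => lam j * w j := fun w => by ext j; simp [hb]
  have hρ' : ∀ w, torusRot (-b) w = fun j => (lam j)⁻¹ * w j := fun w => by
    ext j; simp [AddCircle.toCircle_neg, hb]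
  have hF := fun w (hw : w ∈ U) => hasFDerivAt_secondPartialForm_sub (ρ' := torusRot (-b))
    (hL.differentiable one_ne_zero) hUopen (hχ.differentiableOn one_ne_zero)
    (fun _ => torusRot_mem hUinv b) (fun w => by rw [← torusRot_add, neg_add_cancel]; ext j; simp)
    (fun w hw v => by rw [hρ, hρ']; exact heq w hw v) hw
  have hconst := integral_comp_apply_eq_of_hasFDerivAt_eq_sub volume continuous_torusRot
    torusRot_add hUopen hUconn.isPreconnected (fun θ _ => torusRot_mem hUinv θ)
    (continuousOn_secondPartialForm hL hUopen hχ (torusRot (-b)).continuous.continuousOn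
      fun _ => torusRot_mem hUinv (-b)) b hF hz hU0
  have hFU : ContinuousOn (fun w => L (χ w, χ (torusRot b w))) U :=
    fun w hw => (hF w hw).continuousAt.continuousWithinAt
  have hFc := hFU.comp_continuous (continuous_torusRot.clm_apply continuous_const)
    fun θ => torusRot_mem hUinv θ hz
  simp_rw [← hρ, ← torusRot_coe]
  rw [setIntegral_torusBox_eq_integral
    (f := fun θ => L (χ (torusRot θ z), χ (torusRot b (torusRot θ z)))) hFc.aestronglyMeasurable,
    hconst]
  simp [hχ0, measureReal_univ_torus, pi_ne_zero]
end

section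
/- Let n ≥ 1, s = (s₁,…,sₙ) ∈ ℝⁿ, and set 𝐧 = (s₁,…,sₙ,−1) ∈ ℝ^{n+1}. Let C be the (n+1)×(n+1) real matrix whose row i, for 1 ≤ i ≤ n, has entry 1 in column n+1−i, entry s_{n+1−i} in column n+1, and zeros elsewhere, and whose last row is (s₁,…,sₙ,−1); let 𝐈 = diag(1,…,1,−1) be the (n+1)×(n+1) diagonal matrix. Then C is invertible and C · (|𝐧|² I_{n+1} − 2 𝐧 𝐧ᵀ) = |𝐧|² · 𝐈 · C, where |𝐧|² = 1 + s₁² + ⋯ + sₙ². Equivalently, C⁻¹ 𝐈 C = I_{n+1} − 2 𝐧 𝐧ᵀ/|𝐧|² is the orthogonal reflection in the hyperplane orthogonal to 𝐧. -/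
/-! The last row of `C` is `𝐧` and every other row is orthogonal to `𝐧`, so
`C 𝐧 = |𝐧|² e_{n+1}`. Hence `C 𝐧𝐧ᵀ = |𝐧|² e_{n+1} 𝐧ᵀ` is `|𝐧|²` times the last row of `C`, and
subtracting it twice from `|𝐧|² C` flips the sign of that row, which is `|𝐧|² 𝐈 C`.
`C` is injective: its first `n` rows force `x_j = -s_j x_{n+1}`, and then its last row reads
`-|𝐧|² x_{n+1} = 0`. -/

/-- The matrix `C` from the reflection law: for `1 ≤ i ≤ n` (here 0-indexed `i < n`),
row `i` has entry `1` in column `n+1−i` and entry `s_{n+1−i}` in the last column, and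
the last row is `(s₁, …, sₙ, −1)`. -/
noncomputable def Cmat (n : ℕ) (s : Fin n → ℝ) : Matrix (Fin (n + 1)) (Fin (n + 1)) ℝ :=
  Matrix.of fun i j =>
    if hi : (i : ℕ) < n then
      if hj : (j : ℕ) < n then (if (j : ℕ) = n - 1 - (i : ℕ) then 1 else 0)
      else s ⟨n - 1 - (i : ℕ), by omega⟩
    else if hj : (j : ℕ) < n then s ⟨(j : ℕ), hj⟩ else -1

/-- The normal vector `𝐧 = (s₁, …, sₙ, −1) ∈ ℝ^{n+1}`. -/
noncomputable def nrmVec (n : ℕ) (s : Fin n → ℝ) : Fin (n + 1) → ℝ :=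
  fun i => if h : (i : ℕ) < n then s ⟨(i : ℕ), h⟩ else -1

/-- The diagonal matrix `𝐈 = diag(1, …, 1, −1)`. -/
noncomputable def Imat (n : ℕ) : Matrix (Fin (n + 1)) (Fin (n + 1)) ℝ :=
  Matrix.diagonal fun i => if (i : ℕ) < n then 1 else -1

open Matrix

namespace Matrix

variable {m : Type*} [Fintype m] [DecidableEq m]

theorem mul_smul_one_sub_vecMulVec_eq {R : Type*} [CommRing R] {A : Matrix m m R} {v : m → R}
    {k : m} {c : R} (hAv : A *ᵥ v = Pi.single k c) (hAk : A k = v) :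
    A * (c • 1 - (2 : R) • vecMulVec v v)
      = c • (diagonal (Function.update 1 k (-1)) * A) := by
  rw [mul_sub, Matrix.mul_smul, Matrix.mul_smul, Matrix.mul_one, mul_vecMulVec, hAv]
  ext i j
  rcases eq_or_ne i k with rfl | hik
  · simp [hAk, vecMulVec_apply]
    ring
  · simp [hik, vecMulVec_apply]

theorem inv_mul_mul_eq_inv_smul {K : Type*} [Field K] {A M D : Matrix m m K} {c : K}
    (hA : IsUnit A) (hc : c ≠ 0) (h : A * M = c • (D * A)) : A⁻¹ * D * A = c⁻¹ • M := by
  have hdet : IsUnit A.det := (isUnit_iff_isUnit_det A).mp hA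
  rw [← nonsing_inv_mul_cancel_left (A := A) M hdet, h, Matrix.mul_smul, smul_smul,
    inv_mul_cancel₀ hc, one_smul, Matrix.mul_assoc]

end Matrix

section

variable (n : ℕ) (s : Fin n → ℝ)

@[simp]
theorem nrmVec_castSucc (i : Fin n) : nrmVec n s i.castSucc = s i := by
  simp [nrmVec]

@[simp]
theorem nrmVec_last : nrmVec n s (Fin.last n) = -1 := by
  simp [nrmVec]

theorem Imat_eq_diagonal_update : Imat n = diagonal (Function.update 1 (Fin.last n) (-1)) := by
  unfold Imat
  congr 1
  funext i
  induction i using Fin.lastCases <;> simp [Fin.castSucc_ne_last]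

theorem Cmat_last : Cmat n s (Fin.last n) = nrmVec n s := by
  ext j
  simp [Cmat, nrmVec]

theorem Cmat_castSucc (i : Fin n) :
    Cmat n s i.castSucc = Pi.single i.rev.castSucc 1 + Pi.single (Fin.last n) (s i.rev) := by
  have hrev : n - 1 - (i : ℕ) = i.rev := by simp; omega
  ext j
  induction j using Fin.lastCases with
  | last =>
    simp [Cmat, Fin.ext_iff, hrev, show n ≠ n - (i + 1) by omega]
    rfl
  | cast j => simp [Cmat, Pi.single_apply, Fin.ext_iff, hrev, j.is_lt.ne]

theorem Cmat_mulVec_castSucc (x : Fin (n + 1) → ℝ) (i : Fin n) :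
    (Cmat n s *ᵥ x) i.castSucc = x i.rev.castSucc + s i.rev * x (Fin.last n) := by
  change Cmat n s i.castSucc ⬝ᵥ x = _
  rw [Cmat_castSucc, add_dotProduct, single_dotProduct, single_dotProduct, one_mul]

theorem Cmat_mulVec_last (x : Fin (n + 1) → ℝ) :
    (Cmat n s *ᵥ x) (Fin.last n) = nrmVec n s ⬝ᵥ x := by
  change Cmat n s (Fin.last n) ⬝ᵥ x = _
  rw [Cmat_last]

theorem Cmat_mulVec_nrmVec :
    Cmat n s *ᵥ nrmVec n s = Pi.single (Fin.last n) (1 + ∑ i, s i ^ 2) := by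
  ext i
  induction i using Fin.lastCases with
  | last =>
    simp [Cmat_mulVec_last, dotProduct, Fin.sum_univ_castSucc, sq]
    ring
  | cast i => simp [Cmat_mulVec_castSucc, Fin.castSucc_ne_last]

theorem Cmat_mulVec_eq_zero {x : Fin (n + 1) → ℝ} (h : Cmat n s *ᵥ x = 0) : x = 0 := by
  have hx : ∀ j, x j.castSucc = -(s j * x (Fin.last n)) := fun j => by
    have := congrFun h j.rev.castSucc
    rw [Cmat_mulVec_castSucc, Fin.rev_rev] at this
    simpa [eq_neg_iff_add_eq_zero] using this
  have hlast : (1 + ∑ j, s j ^ 2) * x (Fin.last n) = 0 := by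
    have := congrFun h (Fin.last n)
    simp only [Cmat_mulVec_last, dotProduct, Fin.sum_univ_castSucc, nrmVec_castSucc, hx,
      nrmVec_last, Pi.zero_apply, mul_neg, ← mul_assoc, ← sq, Finset.sum_neg_distrib,
      ← Finset.sum_mul] at this
    linear_combination -this
  replace hlast : x (Fin.last n) = 0 := (mul_eq_zero.mp hlast).resolve_left (by positivity)
  ext j
  induction j using Fin.lastCases with
  | last => exact hlast
  | cast j => simp [hx, hlast]

theorem isUnit_Cmat : IsUnit (Cmat n s) :=
  mulVec_injective_iff_isUnit.mp fun x y hxy =>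
    sub_eq_zero.mp (Cmat_mulVec_eq_zero n s (by rw [mulVec_sub, hxy, sub_self]))

end

theorem statement9_general (n : ℕ) (s : Fin n → ℝ) :
    IsUnit (Cmat n s) ∧
    Cmat n s * ((1 + ∑ i, s i ^ 2) • (1 : Matrix (Fin (n + 1)) (Fin (n + 1)) ℝ)
        - (2 : ℝ) • Matrix.vecMulVec (nrmVec n s) (nrmVec n s))
      = (1 + ∑ i, s i ^ 2) • (Imat n * Cmat n s) ∧
    (Cmat n s)⁻¹ * Imat n * Cmat n s
      = 1 - ((1 + ∑ i, s i ^ 2)⁻¹ * 2) • Matrix.vecMulVec (nrmVec n s) (nrmVec n s) := by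
  have hN : 1 + ∑ i, s i ^ 2 ≠ 0 := by positivity
  have hconj := mul_smul_one_sub_vecMulVec_eq (Cmat_mulVec_nrmVec n s) (Cmat_last n s)
  rw [← Imat_eq_diagonal_update] at hconj
  refine ⟨isUnit_Cmat n s, hconj, ?_⟩
  rw [inv_mul_mul_eq_inv_smul (isUnit_Cmat n s) hN hconj, smul_sub, smul_smul, smul_smul,
    inv_mul_cancel₀ hN, one_smul]

/-- For `n ≥ 1` and `s ∈ ℝⁿ`, with `𝐧 = (s, −1)` and `|𝐧|² = 1 + ∑ sᵢ²`:
the matrix `C` is invertible, `C (|𝐧|² I − 2 𝐧𝐧ᵀ) = |𝐧|² 𝐈 C`, and equivalently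
`C⁻¹ 𝐈 C = I − (2/|𝐧|²) 𝐧𝐧ᵀ` is the orthogonal reflection in the hyperplane
orthogonal to `𝐧`. -/
theorem statement9 (n : ℕ) (hn : 1 ≤ n) (s : Fin n → ℝ) :
    IsUnit (Cmat n s) ∧
    Cmat n s * ((1 + ∑ i, s i ^ 2) • (1 : Matrix (Fin (n + 1)) (Fin (n + 1)) ℝ)
        - (2 : ℝ) • Matrix.vecMulVec (nrmVec n s) (nrmVec n s))
      = (1 + ∑ i, s i ^ 2) • (Imat n * Cmat n s) ∧
    (Cmat n s)⁻¹ * Imat n * Cmat n s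
      = 1 - ((1 + ∑ i, s i ^ 2)⁻¹ * 2) • Matrix.vecMulVec (nrmVec n s) (nrmVec n s) :=
  statement9_general n s
end

section
/- Let λ = (λ₁,…,λₙ) ∈ ℂⁿ with |λ_l| = 1 for all l, let f₀ ∈ ℝ, f₀ ≠ 0, let F₁,…,Fₙ ∈ ℝ, and let c be an n×n complex matrix. Define the real-valued functions χ_j(z) = Σ_{l=1}^n (c_{jl} z_l + \overline{c_{jl}} \overline{z_l}) on ℂⁿ, and let ρ⁻¹z = (λ₁⁻¹z₁,…,λₙ⁻¹zₙ). Then the torus average of the function z ↦ (1/(4f₀)) Σ_{j=1}^n (χ_j(z) − χ_j(ρ⁻¹z))² + Σ_{j=1}^n F_j (χ_j(z)² + χ_j(ρ⁻¹z)²) equals the function z ↦ (1/(2f₀)) Σ_{j,l=1}^n (2 − λ_l − λ_l⁻¹ + 8f₀F_j) |c_{jl}|² z_l \overline{z_l} (each coefficient 2 − λ_l − λ_l⁻¹ being real since |λ_l| = 1). -/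
/-!
Along the torus orbit of `z`, `χ_j(ρ_α z) = ∑_l 2 Re (c_{jl} z_l e^{iα_l})` is a real
trigonometric form in `α`, and so are `χ_j(ρ⁻¹ ρ_α z)` and `χ_j(ρ_α z) − χ_j(ρ⁻¹ ρ_α z)`, with the
coefficients `c_{jl} z_l` multiplied by `λ_l⁻¹`, resp. `1 − λ_l⁻¹`. By orthogonality of the
characters `e^{i⟨k, α⟩}` on `[0, 2π]ⁿ`, the mean of the square of `∑_l (a_l e^{iα_l} + ā_l e^{−iα_l})`
is `2 ∑_l |a_l|²`, and `|1 − λ_l⁻¹|² = 2 − λ_l − λ_l⁻¹` because `|λ_l| = 1`.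
-/

open MeasureTheory

/-- The torus average `⟨g⟩(z) = (2π)⁻ⁿ ∫_{[0,2π]ⁿ} g(ρ_α z) dα`. -/
noncomputable def torusAvg {n : ℕ} (g : (Fin n → ℂ) → ℂ) (z : Fin n → ℂ) : ℂ :=
  ((2 * Real.pi) ^ n)⁻¹ • ∫ α in torusBox n, g (rotAct α z)

/-- The (real-valued) linear functions `χ_j(z) = ∑_l (c_{jl} z_l + c̄_{jl} z̄_l)`. -/
noncomputable def chiLin {n : ℕ} (c : Matrix (Fin n) (Fin n) ℂ) (j : Fin n)
    (z : Fin n → ℂ) : ℂ :=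
  ∑ l, (c j l * z l + (starRingEnd ℂ) (c j l) * (starRingEnd ℂ) (z l))

open Finset ComplexConjugate

lemma integrableOn_torusBox {n : ℕ} {f : (Fin n → ℝ) → ℂ} (hf : Continuous f) :
    IntegrableOn f (torusBox n) :=
  hf.continuousOn.integrableOn_compact (isCompact_univ_pi fun _ => isCompact_Icc)

lemma setIntegral_torusBox_prod {n : ℕ} (f : Fin n → ℝ → ℂ) :
    ∫ α in torusBox n, ∏ j, f j (α j) = ∏ j, ∫ t in Set.Icc 0 (2 * Real.pi), f j t := by
  rw [torusBox, volume_pi, Measure.restrict_pi_pi, integral_fintype_prod_eq_prod]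

lemma setIntegral_Icc_exp_int_mul_I (k : ℤ) :
    ∫ t in Set.Icc 0 (2 * Real.pi), Complex.exp (k * t * Complex.I)
      = if k = 0 then ((2 * Real.pi : ℝ) : ℂ) else 0 := by
  rw [integral_Icc_eq_integral_Ioc, ← intervalIntegral.integral_of_le (by positivity)]
  split_ifs with hk
  · simp [hk]
  have hkI : (k : ℂ) * Complex.I ≠ 0 := by simp [hk]
  have hperiod : Complex.exp (k * Complex.I * (2 * Real.pi)) = 1 := by
    rw [← Complex.exp_int_mul_two_pi_mul_I k]; ring_nf
  simp_rw [mul_right_comm _ _ Complex.I]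
  simp [integral_exp_mul_complex hkI, hperiod]

/-- The character `α ↦ e^{i⟨k, α⟩}` of the torus `ℝⁿ / (2πℤ)ⁿ`. -/
noncomputable def torusChar {n : ℕ} (k : Fin n → ℤ) (α : Fin n → ℝ) : ℂ :=
  Complex.exp (∑ j, (k j : ℂ) * α j * Complex.I)

@[fun_prop]
lemma continuous_torusChar {n : ℕ} (k : Fin n → ℤ) : Continuous (torusChar k) := by
  unfold torusChar; fun_prop

lemma torusChar_add {n : ℕ} (k m : Fin n → ℤ) (α : Fin n → ℝ) :
    torusChar (k + m) α = torusChar k α * torusChar m α := by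
  simp only [torusChar, ← Complex.exp_add, ← sum_add_distrib, Pi.add_apply, Int.cast_add,
    add_mul]

lemma torusChar_single {n : ℕ} (l : Fin n) (ε : ℤ) (α : Fin n → ℝ) :
    torusChar (Pi.single l ε) α = Complex.exp (ε * α l * Complex.I) := by
  simp [torusChar, Pi.single_apply]

lemma setIntegral_torusBox_torusChar {n : ℕ} (k : Fin n → ℤ) :
    ∫ α in torusBox n, torusChar k α = if k = 0 then ((2 * Real.pi : ℝ) : ℂ) ^ n else 0 := by
  simp only [torusChar, Complex.exp_sum]
  rw [setIntegral_torusBox_prod fun j t => Complex.exp (k j * t * Complex.I)]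
  simp only [setIntegral_Icc_exp_int_mul_I]
  split_ifs with hk
  · simp [hk]
  · obtain ⟨j, hj⟩ := Function.ne_iff.mp hk
    exact prod_eq_zero (mem_univ j) (if_neg hj)

lemma setIntegral_torusBox_torusChar_mul {n : ℕ} (k m : Fin n → ℤ) :
    ∫ α in torusBox n, torusChar k α * torusChar m α
      = if k + m = 0 then ((2 * Real.pi : ℝ) : ℂ) ^ n else 0 := by
  simp only [← torusChar_add, setIntegral_torusBox_torusChar]

lemma Pi.single_add_single_eq_zero_iff {ι G : Type*} [DecidableEq ι] [AddGroup G] {l m : ι}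
    {ε δ : G} (hε : ε ≠ 0) :
    (Pi.single l ε + Pi.single m δ : ι → G) = 0 ↔ l = m ∧ ε + δ = 0 := by
  constructor
  · intro h
    have hl := congrFun h l
    by_cases hlm : l = m
    · subst hlm; simpa using hl
    · simp [Ne.symm hlm, hε] at hl
  · rintro ⟨rfl, h⟩
    rw [← Pi.single_add, h, Pi.single_zero]

/-- The real mode `α ↦ 2 Re (a e^{iα_l})`. -/
noncomputable def realMode {n : ℕ} (a : ℂ) (l : Fin n) (α : Fin n → ℝ) : ℂ :=
  a * torusChar (Pi.single l 1) α + conj a * torusChar (Pi.single l (-1)) α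

@[fun_prop]
lemma continuous_realMode {n : ℕ} (a : ℂ) (l : Fin n) : Continuous (realMode a l) := by
  unfold realMode; fun_prop

lemma setIntegral_torusBox_realMode_mul_realMode {n : ℕ} (a b : ℂ) (l m : Fin n) :
    ∫ α in torusBox n, realMode a l α * realMode b m α
      = if l = m then ((2 * Real.pi : ℝ) : ℂ) ^ n * (a * conj b + conj a * b) else 0 := by
  have hexpand : ∀ α, realMode a l α * realMode b m α
        = a * b * (torusChar (Pi.single l 1) α * torusChar (Pi.single m 1) α)
          + a * conj b * (torusChar (Pi.single l 1) α * torusChar (Pi.single m (-1)) α)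
          + conj a * b * (torusChar (Pi.single l (-1)) α * torusChar (Pi.single m 1) α)
          + conj a * conj b * (torusChar (Pi.single l (-1)) α * torusChar (Pi.single m (-1)) α) :=
    fun α => by unfold realMode; ring
  simp_rw [hexpand]
  rw [integral_add (integrableOn_torusBox (by fun_prop)) (integrableOn_torusBox (by fun_prop)),
    integral_add (integrableOn_torusBox (by fun_prop)) (integrableOn_torusBox (by fun_prop)),
    integral_add (integrableOn_torusBox (by fun_prop)) (integrableOn_torusBox (by fun_prop))]
  simp only [integral_const_mul, setIntegral_torusBox_torusChar_mul,
    Pi.single_add_single_eq_zero_iff one_ne_zero,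
    Pi.single_add_single_eq_zero_iff (neg_ne_zero.mpr one_ne_zero)]
  rcases eq_or_ne l m with rfl | hlm
  · norm_num; ring
  · simp [hlm]

noncomputable def realTrigForm {n : ℕ} (a : Fin n → ℂ) (α : Fin n → ℝ) : ℂ :=
  ∑ l, realMode (a l) l α

@[fun_prop]
lemma continuous_realTrigForm {n : ℕ} (a : Fin n → ℂ) : Continuous (realTrigForm a) := by
  unfold realTrigForm; fun_prop

lemma realTrigForm_sub {n : ℕ} (a b : Fin n → ℂ) (α : Fin n → ℝ) :
    realTrigForm a α - realTrigForm b α = realTrigForm (a - b) α := by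
  simp only [realTrigForm, realMode, ← sum_sub_distrib, Pi.sub_apply, map_sub]
  exact sum_congr rfl fun l _ => by ring

lemma setIntegral_torusBox_realTrigForm_sq {n : ℕ} (a : Fin n → ℂ) :
    ∫ α in torusBox n, realTrigForm a α ^ 2
      = ((2 * Real.pi : ℝ) : ℂ) ^ n * ∑ l, 2 * (Complex.normSq (a l) : ℂ) := by
  simp only [sq, realTrigForm, sum_mul_sum]
  rw [integral_finsetSum _ fun l _ => integrableOn_torusBox (by fun_prop), mul_sum]
  refine sum_congr rfl fun l _ => ?_
  rw [integral_finsetSum _ fun m _ => integrableOn_torusBox (by fun_prop)]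
  simp only [setIntegral_torusBox_realMode_mul_realMode, sum_ite_eq, mem_univ, if_true,
    Complex.mul_conj]
  rw [mul_comm (conj (a l)), Complex.mul_conj]
  ring

lemma chiLin_rotAct {n : ℕ} (c : Matrix (Fin n) (Fin n) ℂ) (j : Fin n) (w : Fin n → ℂ)
    (α : Fin n → ℝ) : chiLin c j (rotAct α w) = realTrigForm (fun l => c j l * w l) α := by
  refine sum_congr rfl fun l _ => ?_
  simp only [rotAct, realMode, torusChar_single, map_mul, ← Complex.exp_conj,
    Complex.conj_ofReal, Complex.conj_I]
  push_cast
  ring_nf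

lemma mul_rotAct {n : ℕ} (μ : Fin n → ℂ) (α : Fin n → ℝ) (w : Fin n → ℂ) :
    (fun l => μ l * rotAct α w l) = rotAct α (fun l => μ l * w l) :=
  funext fun _ => mul_left_comm _ _ _

lemma normSq_one_sub_inv_of_norm_eq_one {μ : ℂ} (hμ : ‖μ‖ = 1) :
    (Complex.normSq (1 - μ⁻¹) : ℂ) = 2 - μ - μ⁻¹ := by
  have hμ0 : μ ≠ 0 := norm_ne_zero_iff.mp (by simp [hμ])
  rw [← Complex.mul_conj, map_sub, map_one, map_inv₀, ← Complex.inv_eq_conj hμ, inv_inv]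
  field_simp
  ring

lemma coeff_identity_of_norm_eq_one {μ : ℂ} (hμ : ‖μ‖ = 1) {f₀ : ℝ} (hf₀ : f₀ ≠ 0) (F : ℝ)
    (c w : ℂ) :
    1 / (4 * (f₀ : ℂ)) * (2 * Complex.normSq (c * w - c * (μ⁻¹ * w)))
        + F * (2 * Complex.normSq (c * w) + 2 * Complex.normSq (c * (μ⁻¹ * w)))
      = 1 / (2 * (f₀ : ℂ)) *
          ((2 - μ - μ⁻¹ + 8 * (f₀ : ℂ) * F) * Complex.normSq c * (w * conj w)) := by
  have hf₀' : (f₀ : ℂ) ≠ 0 := Complex.ofReal_ne_zero.mpr hf₀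
  have hμinv : Complex.normSq μ⁻¹ = 1 := by simp [Complex.normSq_eq_norm_sq, hμ]
  rw [show c * w - c * (μ⁻¹ * w) = c * w * (1 - μ⁻¹) by ring, Complex.mul_conj]
  simp only [Complex.normSq_mul, hμinv]
  push_cast
  rw [normSq_one_sub_inv_of_norm_eq_one hμ]
  field_simp
  ring

/-- Let `|λ_l| = 1` for all `l`, `f₀ ≠ 0` real, `F ∈ ℝⁿ`, `c` an `n × n`
complex matrix, `χ_j(z) = ∑_l (c_{jl} z_l + c̄_{jl} z̄_l)` and `ρ⁻¹z = (λ₁⁻¹z₁, …, λₙ⁻¹zₙ)`.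
Then the torus average of
`z ↦ (1/(4f₀)) ∑_j (χ_j(z) − χ_j(ρ⁻¹z))² + ∑_j F_j (χ_j(z)² + χ_j(ρ⁻¹z)²)`
equals `z ↦ (1/(2f₀)) ∑_{j,l} (2 − λ_l − λ_l⁻¹ + 8f₀F_j)|c_{jl}|² z_l z̄_l`. -/
theorem statement11 (n : ℕ) (lam : Fin n → ℂ) (hmod : ∀ l, ‖lam l‖ = 1)
    (f₀ : ℝ) (hf₀ : f₀ ≠ 0) (F : Fin n → ℝ) (c : Matrix (Fin n) (Fin n) ℂ) :
    ∀ z : Fin n → ℂ,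
      torusAvg (fun w =>
        (1 / (4 * (f₀ : ℂ))) *
            ∑ j, (chiLin c j w - chiLin c j (fun l => (lam l)⁻¹ * w l)) ^ 2 +
          ∑ j, (F j : ℂ) *
            ((chiLin c j w) ^ 2 + (chiLin c j (fun l => (lam l)⁻¹ * w l)) ^ 2)) z
      = (1 / (2 * (f₀ : ℂ))) *
          ∑ j, ∑ l, (2 - lam l - (lam l)⁻¹ + 8 * (f₀ : ℂ) * (F j : ℂ)) *
            (Complex.normSq (c j l) : ℂ) * (z l * (starRingEnd ℂ) (z l)) := by
  intro z
  have hP : ((2 * Real.pi : ℝ) : ℂ) ^ n ≠ 0 :=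
    pow_ne_zero _ (Complex.ofReal_ne_zero.mpr Real.two_pi_pos.ne')
  have hsq_add_sq : ∀ a b : Fin n → ℂ,
      ∫ α in torusBox n, realTrigForm a α ^ 2 + realTrigForm b α ^ 2
        = ((2 * Real.pi : ℝ) : ℂ) ^ n * ∑ l, 2 * (Complex.normSq (a l) : ℂ)
          + ((2 * Real.pi : ℝ) : ℂ) ^ n * ∑ l, 2 * (Complex.normSq (b l) : ℂ) := fun a b => by
    rw [integral_add (integrableOn_torusBox (by fun_prop)) (integrableOn_torusBox (by fun_prop)),
      setIntegral_torusBox_realTrigForm_sq, setIntegral_torusBox_realTrigForm_sq]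
  simp only [torusAvg, mul_rotAct, chiLin_rotAct, realTrigForm_sub]
  rw [integral_add (integrableOn_torusBox (by fun_prop)) (integrableOn_torusBox (by fun_prop)),
    integral_const_mul, integral_finsetSum _ fun j _ => integrableOn_torusBox (by fun_prop),
    integral_finsetSum _ fun j _ => integrableOn_torusBox (by fun_prop)]
  simp only [integral_const_mul, hsq_add_sq, setIntegral_torusBox_realTrigForm_sq, Pi.sub_apply,
    Complex.real_smul, Complex.ofReal_inv, Complex.ofReal_pow, mul_sum, ← mul_add,
    ← sum_add_distrib]
  refine sum_congr rfl fun j _ => sum_congr rfl fun l _ => ?_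
  rw [← coeff_identity_of_norm_eq_one (hmod l) hf₀, inv_mul_eq_iff_eq_mul₀ hP]
  ring
end
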